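/- The (−1)-classes of the dP_8 lattice are exactly the vectors of the following seven types, with the indicated counts: e_i (8 classes); l − e_i − e_j with i < j (28 classes); 2l − e_{i_1} − ⋯ − e_{i_5} over 5-element index sets (56 classes); 3l − 2e_i − Σ_{j∈S} e_j with S a 6-element set not containing i (56 classes); 4l − 2e_{i_1} − 2e_{i_2} − 2e_{i_3} − Σ_{j∈S} e_j with S the complementary 5-element set (56 classes); 5l − 2Σ_{j∈S} e_j − e_{k_1} − e_{k_2} with S a 6-element set and {k_1,k_2} its complement (28 classes); and 6l − 3e_i − 2Σ_{j≠i} e_j (8 classes); in total 240 classes. -/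

import Mathlib

namespace Stmt3

/-- Intersection form of the dP₈ lattice `ℤ⁹` with basis `l, e₁, …, e₈`. -/
def dot (x y : Fin 9 → ℤ) : ℤ := x 0 * y 0 - ∑ i : Fin 8, x i.succ * y i.succ

/-- The canonical class `K = -3l + e₁ + ⋯ + e₈`. -/
def K : Fin 9 → ℤ := fun i => if i = 0 then -3 else 1

/-- The hyperplane class `l`. -/
def l : Fin 9 → ℤ := Pi.single 0 1

/-- The exceptional class `e_{j+1}` (`j : Fin 8` zero-based). -/
def e (j : Fin 8) : Fin 9 → ℤ := Pi.single j.succ 1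

/-- The set of (−1)-classes of the dP₈ lattice. -/
def N : Set (Fin 9 → ℤ) := {v | dot v v = -1 ∧ dot v K = -1}

/-- Type 1: `e_i`. -/
def T1 : Set (Fin 9 → ℤ) := {v | ∃ i : Fin 8, v = e i}

/-- Type 2: `l - e_i - e_j` with `i < j`. -/
def T2 : Set (Fin 9 → ℤ) := {v | ∃ i j : Fin 8, i < j ∧ v = l - e i - e j}

/-- Type 3: `2l - e_{i₁} - ⋯ - e_{i₅}` over 5-element index sets. -/
def T3 : Set (Fin 9 → ℤ) :=
  {v | ∃ S : Finset (Fin 8), S.card = 5 ∧ v = (2 : ℤ) • l - ∑ i ∈ S, e i}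

/-- Type 4: `3l - 2e_i - ∑_{j∈S} e_j` with `S` a 6-element set not containing `i`. -/
def T4 : Set (Fin 9 → ℤ) :=
  {v | ∃ (i : Fin 8) (S : Finset (Fin 8)), S.card = 6 ∧ i ∉ S ∧
    v = (3 : ℤ) • l - (2 : ℤ) • e i - ∑ j ∈ S, e j}

/-- Type 5: `4l - 2e_{i₁} - 2e_{i₂} - 2e_{i₃} - ∑_{j∈S} e_j` with `S` the complementary
5-element set. -/
def T5 : Set (Fin 9 → ℤ) :=
  {v | ∃ I : Finset (Fin 8), I.card = 3 ∧
    v = (4 : ℤ) • l - (2 : ℤ) • (∑ i ∈ I, e i) - ∑ j ∈ Iᶜ, e j}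

/-- Type 6: `5l - 2∑_{j∈S} e_j - e_{k₁} - e_{k₂}` with `S` a 6-element set and
`{k₁, k₂}` its complement. -/
def T6 : Set (Fin 9 → ℤ) :=
  {v | ∃ S : Finset (Fin 8), S.card = 6 ∧
    v = (5 : ℤ) • l - (2 : ℤ) • (∑ j ∈ S, e j) - ∑ k ∈ Sᶜ, e k}

/-- Type 7: `6l - 3e_i - 2∑_{j≠i} e_j`. -/
def T7 : Set (Fin 9 → ℤ) :=
  {v | ∃ i : Fin 8, v = (6 : ℤ) • l - (3 : ℤ) • e i - (2 : ℤ) • (∑ j ∈ ({i}ᶜ : Finset (Fin 8)), e j)}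

/-!
Write a class as `Fin.cons a b`, i.e. `a l + ∑ⱼ bⱼ e_{j+1}`. It is a (−1)-class iff
`∑ bⱼ = 1 - 3a` and `∑ bⱼ² = a² + 1`, so Cauchy–Schwarz gives `(1 - 3a)² ≤ 8 (a² + 1)`, i.e.
`-1 ≤ a ≤ 7`. For integers `(b - c)(b - c - 1) ≥ 0`, with equality iff `b ∈ {c, c + 1}`; summed over
`j` this is a function of `a` and `c` alone. Taking `c = ⌊(1 - 3a) / 8⌋` it is negative for
`a = -1, 7` and vanishes for `a ≠ 3`, so then `b` takes two adjacent values with multiplicities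
fixed by `∑ bⱼ`: these are the types 1, 2, 3, 5, 6, 7. For `a = 3`, `∑ (bⱼ + 1)² = 2` forces
`bⱼ ∈ {-2, -1, 0}` with multiplicities `1, 6, 1`: type 4. The types have distinct `a`, so the
count is a sum of binomial coefficients.
-/

open Finset

lemma zero_le_mul_sub_one (x : ℤ) : 0 ≤ x * (x - 1) := by
  rcases le_or_gt x 0 with h | h <;> nlinarith

section NearMean

variable {ι : Type*} [Fintype ι] (b : ι → ℤ) (c : ℤ)

lemma sum_sub_mul_sub_sub_one :
    ∑ j, (b j - c) * (b j - c - 1) =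
      ∑ j, b j ^ 2 - (2 * c + 1) * ∑ j, b j + Fintype.card ι * (c * (c + 1)) := by
  simp only [show ∀ j, (b j - c) * (b j - c - 1) = b j ^ 2 - (2 * c + 1) * b j + c * (c + 1)
    from fun j => by ring, sum_add_distrib, sum_sub_distrib, ← mul_sum, sum_const, card_univ,
    nsmul_eq_mul]
  ring

lemma sum_sub_mul_sub_sub_one_nonneg : 0 ≤ ∑ j, (b j - c) * (b j - c - 1) :=
  sum_nonneg fun _ _ => zero_le_mul_sub_one _

variable {b c}

lemma eq_or_eq_add_one_of_sum_sub_mul_sub_sub_one_eq_zero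
    (h : ∑ j, (b j - c) * (b j - c - 1) = 0) (j : ι) : b j = c ∨ b j = c + 1 := by
  have hj := (sum_eq_zero_iff_of_nonneg fun j _ => zero_le_mul_sub_one _).1 h j (mem_univ j)
  rcases mul_eq_zero.1 hj with h | h <;> omega

end NearMean

lemma sum_comp_ite_mem {ι : Type*} [Fintype ι] [DecidableEq ι] (f : ℤ → ℤ) (S : Finset ι)
    (x y : ℤ) : ∑ j, f (if j ∈ S then x else y) = #S * f x + (Fintype.card ι - #S) * f y := by
  rw [← sum_add_sum_compl S, sum_congr rfl fun j (hj : j ∈ S) => by rw [if_pos hj],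
    sum_congr rfl fun j (hj : j ∈ Sᶜ) => by rw [if_neg (mem_compl.1 hj)], sum_const, sum_const,
    card_compl, nsmul_eq_mul, nsmul_eq_mul, Nat.cast_sub (card_le_univ S)]

lemma sum_comp_of_forall_eq_or_eq_or_eq {ι : Type*} [Fintype ι] {b : ι → ℤ} {x y z : ℤ}
    (hxy : x ≠ y) (hxz : x ≠ z) (hyz : y ≠ z) (hb : ∀ j, b j = x ∨ b j = y ∨ b j = z)
    (g : ℤ → ℤ) :
    ∑ j, g (b j) = #{j | b j = x} * g x + #{j | b j = y} * g y + #{j | b j = z} * g z := by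
  have hg (j : ι) : g (b j) = (if b j = x then g x else 0) + (if b j = y then g y else 0) +
      (if b j = z then g z else 0) := by
    rcases hb j with h | h | h <;> simp [h, hxy, hxz, hyz, hxy.symm, hxz.symm, hyz.symm]
  simp only [hg, sum_add_distrib, ← sum_filter, sum_const, nsmul_eq_mul]

lemma image_setOf_card_eq_one {α ι : Type*} (f : Finset ι → α) :
    f '' {S | #S = 1} = {v | ∃ i, v = f {i}} := by
  ext v
  simp only [Set.mem_image, Set.mem_ofPred_eq, card_eq_one]
  constructor
  · rintro ⟨_, ⟨i, rfl⟩, rfl⟩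
    exact ⟨i, rfl⟩
  · rintro ⟨i, rfl⟩
    exact ⟨{i}, ⟨i, rfl⟩, rfl⟩

lemma image_setOf_card_eq_two {α ι : Type*} [LinearOrder ι] (f : Finset ι → α) :
    f '' {S | #S = 2} = {v | ∃ i j, i < j ∧ v = f {i, j}} := by
  ext v
  simp only [Set.mem_image, Set.mem_ofPred_eq, card_eq_two]
  constructor
  · rintro ⟨_, ⟨i, j, hij, rfl⟩, rfl⟩
    rcases hij.lt_or_gt with h | h
    · exact ⟨i, j, h, rfl⟩
    · exact ⟨j, i, h, by rw [pair_comm]⟩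
  · rintro ⟨i, j, hij, rfl⟩
    exact ⟨{i, j}, ⟨i, j, hij.ne, rfl⟩, rfl⟩

@[simp] lemma l_zero : l 0 = 1 := rfl

@[simp] lemma l_succ (j : Fin 8) : l j.succ = 0 := Pi.single_eq_of_ne (Fin.succ_ne_zero j) 1

@[simp] lemma e_zero (i : Fin 8) : e i 0 = 0 := Pi.single_eq_of_ne (Fin.succ_ne_zero i).symm 1

@[simp] lemma e_succ (i j : Fin 8) : e i j.succ = if j = i then 1 else 0 := by
  simp [e, Pi.single_apply]

@[simp] lemma sum_e_zero (S : Finset (Fin 8)) : (∑ i ∈ S, e i) 0 = 0 := by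
  simp [Finset.sum_apply]

@[simp] lemma sum_e_succ (S : Finset (Fin 8)) (j : Fin 8) :
    (∑ i ∈ S, e i) j.succ = if j ∈ S then 1 else 0 := by
  simp [Finset.sum_apply]

@[simp] lemma K_zero : K 0 = -3 := rfl

@[simp] lemma K_succ (j : Fin 8) : K j.succ = 1 := if_neg (Fin.succ_ne_zero j)

lemma cons_mem_N_iff {a : ℤ} {b : Fin 8 → ℤ} :
    (Fin.cons a b : Fin 9 → ℤ) ∈ N ↔ ∑ j, b j = 1 - 3 * a ∧ ∑ j, b j ^ 2 = a ^ 2 + 1 := by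
  simp only [N, dot, Set.mem_ofPred_eq, Fin.cons_zero, Fin.cons_succ, K_zero, K_succ, mul_one, sq]
  constructor <;> rintro ⟨h₁, h₂⟩ <;> constructor <;> linarith

section Degree

variable {a : ℤ} {b : Fin 8 → ℤ}

lemma neg_one_le_and_le_seven_of_cons_mem_N (h : (Fin.cons a b : Fin 9 → ℤ) ∈ N) :
    -1 ≤ a ∧ a ≤ 7 := by
  obtain ⟨hs, hq⟩ := cons_mem_N_iff.1 h
  have := sq_sum_le_card_mul_sum_sq (s := univ) (f := b)
  rw [hs, hq, card_univ, Fintype.card_fin, Nat.cast_ofNat] at this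
  constructor <;> nlinarith

lemma sum_sub_mul_sub_sub_one_of_cons_mem_N (h : (Fin.cons a b : Fin 9 → ℤ) ∈ N) (c : ℤ) :
    ∑ j, (b j - c) * (b j - c - 1) = a ^ 2 + 1 - (2 * c + 1) * (1 - 3 * a) + 8 * (c * (c + 1)) := by
  obtain ⟨hs, hq⟩ := cons_mem_N_iff.1 h
  rw [sum_sub_mul_sub_sub_one, hs, hq, Fintype.card_fin, Nat.cast_ofNat]

end Degree

def twoValued (a x y : ℤ) (S : Finset (Fin 8)) : Fin 9 → ℤ :=
  Fin.cons a fun j => if j ∈ S then x else y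

section TwoValued

variable {a x y : ℤ}

@[simp] lemma twoValued_zero (S : Finset (Fin 8)) : twoValued a x y S 0 = a := rfl

@[simp] lemma twoValued_succ (S : Finset (Fin 8)) (j : Fin 8) :
    twoValued a x y S j.succ = if j ∈ S then x else y := rfl

lemma eq_twoValued_iff {v : Fin 9 → ℤ} {S : Finset (Fin 8)} :
    v = twoValued a x y S ↔ v 0 = a ∧ ∀ j, v j.succ = if j ∈ S then x else y := by
  rw [← Fin.cons_self_tail v, twoValued, Fin.cons_inj, funext_iff]
  rfl

lemma twoValued_injective (a : ℤ) (hxy : x ≠ y) : Function.Injective (twoValued a x y) := by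
  intro S T h
  ext j
  have hj := congrFun h j.succ
  simp only [twoValued_succ] at hj
  split_ifs at hj <;> simp_all

lemma twoValued_mem_N_iff {S : Finset (Fin 8)} :
    twoValued a x y S ∈ N ↔
      #S * x + (8 - #S) * y = 1 - 3 * a ∧ #S * x ^ 2 + (8 - #S) * y ^ 2 = a ^ 2 + 1 := by
  have hsum : ∑ j, (if j ∈ S then x else y) = #S * x + (8 - #S) * y := by
    simpa using sum_comp_ite_mem id S x y
  rw [twoValued, cons_mem_N_iff, hsum, sum_comp_ite_mem (· ^ 2), Fintype.card_fin]
  rfl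

lemma twoValued_image_subset_N {k : ℕ} (hlin : k * x + (8 - k) * y = 1 - 3 * a)
    (hquad : k * x ^ 2 + (8 - k) * y ^ 2 = a ^ 2 + 1) :
    twoValued a x y '' {S | #S = k} ⊆ N := by
  rintro _ ⟨S, rfl, rfl⟩
  exact twoValued_mem_N_iff.2 ⟨hlin, hquad⟩

lemma cons_mem_twoValued_image {b : Fin 8 → ℤ} (h : (Fin.cons a b : Fin 9 → ℤ) ∈ N)
    (hxy : x ≠ y) (hb : ∀ j, b j = x ∨ b j = y) (k : ℕ) (hk : k * x + (8 - k) * y = 1 - 3 * a) :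
    (Fin.cons a b : Fin 9 → ℤ) ∈ twoValued a x y '' {S | #S = k} := by
  set S := univ.filter (b · = x)
  have hbS : (Fin.cons a b : Fin 9 → ℤ) = twoValued a x y S := by
    refine eq_twoValued_iff.2 ⟨rfl, fun j => ?_⟩
    by_cases hj : b j = x
    · simp [S, hj]
    · simp [S, (hb j).resolve_left hj]
  rw [hbS] at h ⊢
  refine ⟨S, ?_, rfl⟩
  have hS := (twoValued_mem_N_iff.1 h).1
  have : (x - y) * #S = (x - y) * k := by linear_combination hS - hk
  exact_mod_cast mul_left_cancel₀ (sub_ne_zero.2 hxy) this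

lemma ncard_twoValued_image (a : ℤ) (hxy : x ≠ y) (k : ℕ) :
    (twoValued a x y '' {S | #S = k}).ncard = Nat.choose 8 k := by
  rw [Set.ncard_image_of_injective _ (twoValued_injective a hxy),
    show {S : Finset (Fin 8) | #S = k} = ↑(powersetCard k (univ : Finset (Fin 8))) by ext; simp,
    Set.ncard_coe_finset, card_powersetCard, card_univ, Fintype.card_fin]

end TwoValued

lemma T1_eq : T1 = twoValued 0 1 0 '' {S | #S = 1} := by
  have hv (i : Fin 8) : e i = twoValued 0 1 0 {i} :=
    eq_twoValued_iff.2 ⟨by simp, fun j => by simp⟩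
  rw [image_setOf_card_eq_one]
  exact Set.ext fun v => exists_congr fun i => by rw [hv]

lemma T2_eq : T2 = twoValued 1 (-1) 0 '' {S | #S = 2} := by
  have hv {i j : Fin 8} (hij : i ≠ j) : l - e i - e j = twoValued 1 (-1) 0 {i, j} := by
    refine eq_twoValued_iff.2 ⟨by simp, fun k => ?_⟩
    by_cases hki : k = i <;> by_cases hkj : k = j <;> simp_all
  rw [image_setOf_card_eq_two]
  exact Set.ext fun v => exists_congr fun i => exists_congr fun j =>
    and_congr_right fun hij => by rw [hv hij.ne]

lemma T3_eq : T3 = twoValued 2 (-1) 0 '' {S | #S = 5} := by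
  have hv (S : Finset (Fin 8)) : (2 : ℤ) • l - ∑ i ∈ S, e i = twoValued 2 (-1) 0 S :=
    eq_twoValued_iff.2 ⟨by simp, fun j => by simp [apply_ite]⟩
  exact Set.ext fun v => exists_congr fun S => and_congr_right fun _ => by rw [hv, eq_comm]

lemma T5_eq : T5 = twoValued 4 (-2) (-1) '' {S | #S = 3} := by
  have hv (S : Finset (Fin 8)) :
      (4 : ℤ) • l - (2 : ℤ) • (∑ i ∈ S, e i) - ∑ j ∈ Sᶜ, e j = twoValued 4 (-2) (-1) S :=
    eq_twoValued_iff.2 ⟨by simp, fun j => by by_cases hj : j ∈ S <;> simp [hj]⟩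
  exact Set.ext fun v => exists_congr fun S => and_congr_right fun _ => by rw [hv, eq_comm]

lemma T6_eq : T6 = twoValued 5 (-2) (-1) '' {S | #S = 6} := by
  have hv (S : Finset (Fin 8)) :
      (5 : ℤ) • l - (2 : ℤ) • (∑ i ∈ S, e i) - ∑ j ∈ Sᶜ, e j = twoValued 5 (-2) (-1) S :=
    eq_twoValued_iff.2 ⟨by simp, fun j => by by_cases hj : j ∈ S <;> simp [hj]⟩
  exact Set.ext fun v => exists_congr fun S => and_congr_right fun _ => by rw [hv, eq_comm]

lemma T7_eq : T7 = twoValued 6 (-3) (-2) '' {S | #S = 1} := by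
  have hv (i : Fin 8) : (6 : ℤ) • l - (3 : ℤ) • e i - (2 : ℤ) • (∑ j ∈ ({i}ᶜ : Finset (Fin 8)), e j)
      = twoValued 6 (-3) (-2) {i} :=
    eq_twoValued_iff.2 ⟨by simp, fun j => by by_cases hj : j = i <;> simp [hj]⟩
  rw [image_setOf_card_eq_one]
  exact Set.ext fun v => exists_congr fun i => by rw [hv]

lemma T4_class_eq_cons {i : Fin 8} {S : Finset (Fin 8)} (hiS : i ∉ S) :
    (3 : ℤ) • l - (2 : ℤ) • e i - ∑ j ∈ S, e j =
      Fin.cons 3 fun j => if j = i then -2 else if j ∈ S then -1 else 0 := by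
  rw [← Fin.cons_self_tail ((3 : ℤ) • l - (2 : ℤ) • e i - ∑ j ∈ S, e j), Fin.cons_inj]
  refine ⟨by simp, funext fun j => ?_⟩
  by_cases hj : j = i
  · simp [Fin.tail, hj, hiS]
  · by_cases hjS : j ∈ S <;> simp [Fin.tail, hj, hjS]

lemma T4_subset_N : T4 ⊆ N := by
  rintro _ ⟨i, S, hS, hiS, rfl⟩
  rw [T4_class_eq_cons hiS, cons_mem_N_iff]
  set b : Fin 8 → ℤ := fun j => if j = i then -2 else if j ∈ S then -1 else 0
  have hb (j : Fin 8) : b j = -2 ∨ b j = -1 ∨ b j = 0 := by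
    simp only [b]; split_ifs <;> simp
  have hA : #{j | b j = -2} = 1 :=
    card_eq_one.2 ⟨i, by ext j; by_cases hj : j = i <;> by_cases hjS : j ∈ S <;> simp [b, hj, hjS]⟩
  have hB : #{j | b j = -1} = 6 := by
    rw [← hS]; congr 1; ext j; by_cases hj : j = i <;> simp [b, hj, hiS]
  have hsum := sum_comp_of_forall_eq_or_eq_or_eq (by norm_num) (by norm_num) (by norm_num) hb
  have hlin := hsum id
  have hquad := hsum (· ^ 2)
  norm_num [hA, hB] at hlin hquad
  exact ⟨hlin, hquad⟩

lemma eq_neg_two_or_eq_neg_one_or_eq_zero_of_cons_three_mem_N {b : Fin 8 → ℤ}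
    (h : (Fin.cons 3 b : Fin 9 → ℤ) ∈ N) (j : Fin 8) : b j = -2 ∨ b j = -1 ∨ b j = 0 := by
  obtain ⟨hs, hq⟩ := cons_mem_N_iff.1 h
  have hsq : ∑ j, (b j + 1) ^ 2 = 2 := by
    simp only [add_sq, mul_one, one_pow, sum_add_distrib, ← mul_sum, hs, hq, sum_const,
      card_univ, Fintype.card_fin]
    norm_num
  have hj := single_le_sum (fun j _ => sq_nonneg (b j + 1)) (mem_univ j)
  rw [hsq] at hj
  have : -1 ≤ b j + 1 ∧ b j + 1 ≤ 1 := by constructor <;> nlinarith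
  omega

lemma cons_three_mem_T4 {b : Fin 8 → ℤ} (h : (Fin.cons 3 b : Fin 9 → ℤ) ∈ N) :
    (Fin.cons 3 b : Fin 9 → ℤ) ∈ T4 := by
  obtain ⟨hs, hq⟩ := cons_mem_N_iff.1 h
  have hb := eq_neg_two_or_eq_neg_one_or_eq_zero_of_cons_three_mem_N h
  have hsum := sum_comp_of_forall_eq_or_eq_or_eq (by norm_num) (by norm_num) (by norm_num) hb
  have hlin := hsum id
  have hquad := hsum (· ^ 2)
  have hcard := hsum 1
  norm_num [hs, hq] at hlin hquad hcard
  obtain ⟨i, hi⟩ := card_eq_one.1 (show #{j | b j = -2} = 1 by omega)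
  have hbj {j : Fin 8} : b j = -2 ↔ j = i := by simpa using congrArg (j ∈ ·) hi
  set S : Finset (Fin 8) := {j | b j = -1}
  have hiS : i ∉ S := by simp [S, hbj.2 rfl]
  refine ⟨i, S, by omega, hiS, ?_⟩
  rw [T4_class_eq_cons hiS]
  congr 1
  funext j
  rcases hb j with hj | hj | hj
  · simp [hbj.1 hj, hbj.2 rfl]
  all_goals
    have : j ≠ i := fun hji => by rw [← hbj] at hji; omega
    simp [this, S, hj]

lemma ncard_T4 : T4.ncard = 56 := by
  set f : Fin 8 × Finset (Fin 8) → Fin 9 → ℤ :=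
    fun p => (3 : ℤ) • l - (2 : ℤ) • e p.1 - ∑ j ∈ p.2, e j
  have hT4 : T4 = f '' {p | #p.2 = 6 ∧ p.1 ∉ p.2} := by
    ext v
    simp [T4, f, eq_comm, and_assoc]
  have hinj : Set.InjOn f {p | #p.2 = 6 ∧ p.1 ∉ p.2} := by
    rintro ⟨i, S⟩ ⟨-, hiS⟩ ⟨i', S'⟩ ⟨-, hiS'⟩ h
    dsimp only [f] at h hiS hiS'
    rw [T4_class_eq_cons hiS, T4_class_eq_cons hiS', Fin.cons_inj, funext_iff] at h
    obtain rfl : i = i' := by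
      have := h.2 i
      split_ifs at this <;> simp_all
    congr 1
    ext j
    have := h.2 j
    by_cases hj : j = i <;> split_ifs at this <;> simp_all
  rw [hT4, hinj.ncard_image, Set.ncard_eq_toFinset_card']
  decide

lemma N_subset : N ⊆ T1 ∪ T2 ∪ T3 ∪ T4 ∪ T5 ∪ T6 ∪ T7 := by
  intro v hv
  obtain ⟨a, b, rfl⟩ := Fin.exists_cons v
  have hprod := sum_sub_mul_sub_sub_one_of_cons_mem_N hv
  -- Each case takes `c = ⌊(1 - 3a) / 8⌋`.
  have hnear (c : ℤ) (hc : a ^ 2 + 1 - (2 * c + 1) * (1 - 3 * a) + 8 * (c * (c + 1)) = 0) :=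
    eq_or_eq_add_one_of_sum_sub_mul_sub_sub_one_eq_zero ((hprod c).trans hc)
  obtain ⟨hlo, hhi⟩ := neg_one_le_and_le_seven_of_cons_mem_N hv
  interval_cases a
  · linarith [hprod 0, sum_sub_mul_sub_sub_one_nonneg b 0]
  · have h : _ ∈ T1 := T1_eq ▸ cons_mem_twoValued_image hv (by norm_num)
      (fun j => (hnear 0 (by norm_num) j).symm) 1 (by norm_num)
    simp [h]
  · have h : _ ∈ T2 := T2_eq ▸ cons_mem_twoValued_image hv (by norm_num)
      (hnear (-1) (by norm_num)) 2 (by norm_num)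
    simp [h]
  · have h : _ ∈ T3 := T3_eq ▸ cons_mem_twoValued_image hv (by norm_num)
      (hnear (-1) (by norm_num)) 5 (by norm_num)
    simp [h]
  · simp [cons_three_mem_T4 hv]
  · have h : _ ∈ T5 := T5_eq ▸ cons_mem_twoValued_image hv (by norm_num)
      (hnear (-2) (by norm_num)) 3 (by norm_num)
    simp [h]
  · have h : _ ∈ T6 := T6_eq ▸ cons_mem_twoValued_image hv (by norm_num)
      (hnear (-2) (by norm_num)) 6 (by norm_num)
    simp [h]
  · have h : _ ∈ T7 := T7_eq ▸ cons_mem_twoValued_image hv (by norm_num)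
      (hnear (-3) (by norm_num)) 1 (by norm_num)
    simp [h]
  · linarith [hprod (-3), sum_sub_mul_sub_sub_one_nonneg b (-3)]

lemma N_eq : N = T1 ∪ T2 ∪ T3 ∪ T4 ∪ T5 ∪ T6 ∪ T7 := by
  refine N_subset.antisymm (Set.union_subset (Set.union_subset (Set.union_subset
    (Set.union_subset (Set.union_subset (Set.union_subset ?_ ?_) ?_) T4_subset_N) ?_) ?_) ?_)
  · exact T1_eq ▸ twoValued_image_subset_N (by norm_num) (by norm_num)
  · exact T2_eq ▸ twoValued_image_subset_N (by norm_num) (by norm_num)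
  · exact T3_eq ▸ twoValued_image_subset_N (by norm_num) (by norm_num)
  · exact T5_eq ▸ twoValued_image_subset_N (by norm_num) (by norm_num)
  · exact T6_eq ▸ twoValued_image_subset_N (by norm_num) (by norm_num)
  · exact T7_eq ▸ twoValued_image_subset_N (by norm_num) (by norm_num)

lemma ncard_T1 : T1.ncard = 8 := by rw [T1_eq, ncard_twoValued_image 0 (by norm_num)]; rfl
lemma ncard_T2 : T2.ncard = 28 := by rw [T2_eq, ncard_twoValued_image 1 (by norm_num)]; rfl
lemma ncard_T3 : T3.ncard = 56 := by rw [T3_eq, ncard_twoValued_image 2 (by norm_num)]; rfl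
lemma ncard_T5 : T5.ncard = 56 := by rw [T5_eq, ncard_twoValued_image 4 (by norm_num)]; rfl
lemma ncard_T6 : T6.ncard = 28 := by rw [T6_eq, ncard_twoValued_image 5 (by norm_num)]; rfl
lemma ncard_T7 : T7.ncard = 8 := by rw [T7_eq, ncard_twoValued_image 6 (by norm_num)]; rfl

lemma forall_mem_twoValued_image_apply_zero {a x y : ℤ} {A : Set (Finset (Fin 8))} :
    ∀ v ∈ twoValued a x y '' A, v 0 = a :=
  Set.forall_mem_image.2 fun _ _ => rfl

lemma apply_zero_eq_of_mem_types (k : Fin 7) :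
    ∀ v ∈ ![T1, T2, T3, T4, T5, T6, T7] k, v 0 = k := by
  fin_cases k <;> simp only [Fin.reduceFinMk, Matrix.cons_val, Nat.cast_ofNat, Nat.cast_zero,
    Nat.cast_one]
  · rw [T1_eq]; exact forall_mem_twoValued_image_apply_zero
  · rw [T2_eq]; exact forall_mem_twoValued_image_apply_zero
  · rw [T3_eq]; exact forall_mem_twoValued_image_apply_zero
  · rintro _ ⟨i, S, -, -, rfl⟩
    simp
  · rw [T5_eq]; exact forall_mem_twoValued_image_apply_zero
  · rw [T6_eq]; exact forall_mem_twoValued_image_apply_zero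
  · rw [T7_eq]; exact forall_mem_twoValued_image_apply_zero

lemma ncard_N : N.ncard = 240 := by
  let T : Fin 7 → Set (Fin 9 → ℤ) := ![T1, T2, T3, T4, T5, T6, T7]
  have hN : N = ⋃ k, T k := by
    rw [N_eq]
    ext v
    simp [T, Fin.exists_fin_succ, or_assoc]
  have hcard (k : Fin 7) : (T k).ncard = ![8, 28, 56, 56, 56, 28, 8] k := by
    fin_cases k
    exacts [ncard_T1, ncard_T2, ncard_T3, ncard_T4, ncard_T5, ncard_T6, ncard_T7]
  have hfin (k : Fin 7) : (T k).Finite :=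
    Set.finite_of_ncard_ne_zero (by rw [hcard]; fin_cases k <;> decide)
  have hdisj : Pairwise fun k k' => Disjoint (T k) (T k') := fun k k' hkk' =>
    Set.disjoint_left.2 fun v hk hk' => hkk' <| Fin.ext <| by
      exact_mod_cast (apply_zero_eq_of_mem_types k v hk).symm.trans
        (apply_zero_eq_of_mem_types k' v hk')
  rw [hN, Set.ncard_iUnion_of_finite hfin hdisj, finsum_eq_sum_of_fintype, Fin.sum_univ_seven]
  simp [hcard]

theorem statement3 :
    N = T1 ∪ T2 ∪ T3 ∪ T4 ∪ T5 ∪ T6 ∪ T7 ∧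
    T1.ncard = 8 ∧ T2.ncard = 28 ∧ T3.ncard = 56 ∧ T4.ncard = 56 ∧
    T5.ncard = 56 ∧ T6.ncard = 28 ∧ T7.ncard = 8 ∧
    N.ncard = 240 :=
  ⟨N_eq, ncard_T1, ncard_T2, ncard_T3, ncard_T4, ncard_T5, ncard_T6, ncard_T7, ncard_N⟩

end Stmt3
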